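/- arXiv:2304.14341 — 6 statements merged into one kernel-verified Lean document; each statement's English description precedes it below -/
import Mathlib

section
/- Let ℓ be a time-separation function on M and ∼ the equivalence relation x ∼ y iff max{ℓ(x,y), ℓ(y,x)} ≤ 0. On the quotient M̃ = M/∼, the function ℓ̃(x̃,ỹ) := inf{ℓ(x,y) : x ∈ x̃, y ∈ ỹ} is a time-separation function, i.e., it satisfies ℓ̃(x̃,x̃) ≤ 0 and the triangle inequality ℓ̃(x̃,z̃) ≤ ℓ̃(x̃,ỹ) + ℓ̃(ỹ,z̃) whenever both summands are finite. -/
/-!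
Where it is finite, `ℓ x ·` is nonincreasing along `∼`: if `y ∼ y'` and
`ℓ x y < ⊤`, then `ℓ x y' ≤ ℓ x y + ℓ y y' ≤ ℓ x y`. Hence two chains `x → y` and `y' → z` through
the same class can be glued, giving `ℓ x z ≤ ℓ x y + ℓ y' z`; taking infima over representatives
yields the triangle inequality on the quotient.
-/

theorem sInf_le_or_eq_top {α : Type*} [CompleteLattice α] {s : Set α} {c : α}
    (h : ∀ v ∈ s, v ≤ c ∨ v = ⊤) : sInf s ≤ c ∨ sInf s = ⊤ := by
  by_cases hs : ∃ v ∈ s, v ≤ c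
  · obtain ⟨v, hv, hvc⟩ := hs
    exact .inl ((sInf_le hv).trans hvc)
  · exact .inr (sInf_eq_top.2 fun v hv => (h v hv).resolve_left fun hvc => hs ⟨v, hv, hvc⟩)

section TimeSeparation

variable {M : Type*} {ℓ : M → M → EReal}

theorem le_add_of_le_zero_of_lt_top
    (htri : ∀ x y z, ℓ x y < ⊤ → ℓ y z < ⊤ → ℓ x z ≤ ℓ x y + ℓ y z)
    {x y y' z : M} (hyy' : ℓ y y' ≤ 0) (hxy : ℓ x y < ⊤) (hyz : ℓ y' z < ⊤) :
    ℓ x z ≤ ℓ x y + ℓ y' z := by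
  have hxy' : ℓ x y' ≤ ℓ x y :=
    calc ℓ x y' ≤ ℓ x y + ℓ y y' := htri x y y' hxy (hyy'.trans_lt EReal.zero_lt_top)
      _ ≤ ℓ x y := add_le_of_nonpos_right hyy'
  calc ℓ x z ≤ ℓ x y' + ℓ y' z := htri x y' z (hxy'.trans_lt hxy) hyz
    _ ≤ ℓ x y + ℓ y' z := add_le_add_left hxy' _

end TimeSeparation

section QuotInf

variable {M α : Type*} {S : Setoid M}

def quotInf [CompleteLattice α] (S : Setoid M) (ℓ : M → M → α) (a b : Quotient S) : α :=
  sInf {v | ∃ x y : M, a = Quotient.mk S x ∧ b = Quotient.mk S y ∧ v = ℓ x y}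

theorem quotInf_le [CompleteLattice α] (ℓ : M → M → α) (x y : M) :
    quotInf S ℓ (Quotient.mk S x) (Quotient.mk S y) ≤ ℓ x y :=
  sInf_le ⟨x, y, rfl, rfl, rfl⟩

theorem exists_lt_of_quotInf_lt [CompleteLinearOrder α] {ℓ : M → M → α} {a b : Quotient S}
    {t : α} (h : quotInf S ℓ a b < t) :
    ∃ x y, Quotient.mk S x = a ∧ Quotient.mk S y = b ∧ ℓ x y < t := by
  obtain ⟨_, ⟨x, y, rfl, rfl, rfl⟩, hlt⟩ := sInf_lt_iff.mp h
  exact ⟨x, y, rfl, rfl, hlt⟩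

theorem quotInf_le_add {ℓ : M → M → EReal}
    (htri : ∀ x y z, ℓ x y < ⊤ → ℓ y z < ⊤ → ℓ x z ≤ ℓ x y + ℓ y z)
    (hS : ∀ y y' : M, y ≈ y' → ℓ y y' ≤ 0) {a b c : Quotient S}
    (hab : quotInf S ℓ a b < ⊤) (hbc : quotInf S ℓ b c < ⊤) :
    quotInf S ℓ a c ≤ quotInf S ℓ a b + quotInf S ℓ b c := by
  refine EReal.le_add_of_forall_gt (.inr hbc.ne) (.inl hab.ne) fun s hs t ht => ?_
  -- Bounding by `min s ⊤` keeps the chosen values finite, so `htri` applies to them.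
  obtain ⟨x, y, rfl, rfl, hxy⟩ := exists_lt_of_quotInf_lt (lt_min hs hab)
  obtain ⟨y', z, hy, rfl, hyz⟩ := exists_lt_of_quotInf_lt (lt_min ht hbc)
  rw [lt_min_iff] at hxy hyz
  calc quotInf S ℓ _ _ ≤ ℓ x z := quotInf_le ℓ x z
    _ ≤ ℓ x y + ℓ y' z :=
      le_add_of_le_zero_of_lt_top htri (hS y y' (Quotient.exact hy.symm)) hxy.2 hyz.2
    _ ≤ s + t := add_le_add hxy.1.le hyz.1.le

end QuotInf

/-- the infimum of ℓ over equivalence classes defines a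
time-separation function on the quotient M/∼. -/
theorem stmt4 {M : Type*} (ℓ : M → M → EReal)
    (hrange : ∀ x y, ℓ x y ≤ 0 ∨ ℓ x y = ⊤)
    (hrefl : ∀ x, ℓ x x ≤ 0)
    (htri : ∀ x y z, ℓ x y < ⊤ → ℓ y z < ⊤ → ℓ x z ≤ ℓ x y + ℓ y z)
    (hequiv : Equivalence (fun x y : M => max (ℓ x y) (ℓ y x) ≤ 0)) :
    let S : Setoid M := ⟨fun x y => max (ℓ x y) (ℓ y x) ≤ 0, hequiv⟩
    let L : Quotient S → Quotient S → EReal := fun a b =>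
      sInf {v | ∃ x y : M, a = Quotient.mk S x ∧ b = Quotient.mk S y ∧ v = ℓ x y}
    (∀ a, L a a ≤ 0) ∧ (∀ a b, L a b ≤ 0 ∨ L a b = ⊤) ∧
    (∀ a b c, L a b < ⊤ → L b c < ⊤ → L a c ≤ L a b + L b c) := by
  intro S L
  refine ⟨fun a => ?_, fun a b => sInf_le_or_eq_top ?_, fun a b c => quotInf_le_add htri ?_⟩
  · induction a using Quotient.inductionOn with
    | h x => exact (quotInf_le ℓ x x).trans (hrefl x)
  · rintro _ ⟨x, y, -, -, rfl⟩
    exact hrange x y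
  · exact fun y y' h => le_of_max_le_left h
end

section
/- Let ℓ be a time-separation function on M, ∼ the equivalence relation x ∼ y iff max{ℓ(x,y), ℓ(y,x)} ≤ 0, and ℓ̃ the induced time-separation function on M̃ = M/∼ defined by ℓ̃(x̃,ỹ) = inf{ℓ(x,y) : x ∈ x̃, y ∈ ỹ}. Then ℓ̃ satisfies antisymmetry: max{ℓ̃(x̃,ỹ), ℓ̃(ỹ,x̃)} < ∞ if and only if x̃ = ỹ. -/
/-- the quotient time-separation function satisfies antisymmetry:
max{ℓ̃(x̃,ỹ), ℓ̃(ỹ,x̃)} < ∞ iff x̃ = ỹ. -/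
theorem stmt5 {M : Type*} (ℓ : M → M → EReal)
    (hrange : ∀ x y, ℓ x y ≤ 0 ∨ ℓ x y = ⊤)
    (hrefl : ∀ x, ℓ x x ≤ 0)
    (htri : ∀ x y z, ℓ x y < ⊤ → ℓ y z < ⊤ → ℓ x z ≤ ℓ x y + ℓ y z)
    (hequiv : Equivalence (fun x y : M => max (ℓ x y) (ℓ y x) ≤ 0)) :
    let S : Setoid M := ⟨fun x y => max (ℓ x y) (ℓ y x) ≤ 0, hequiv⟩
    let L : Quotient S → Quotient S → EReal := fun a b =>
      sInf {v | ∃ x y : M, a = Quotient.mk S x ∧ b = Quotient.mk S y ∧ v = ℓ x y}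
    ∀ a b : Quotient S, max (L a b) (L b a) < ⊤ ↔ a = b := by
  intro S L a b
  have top0 : (0 : EReal) < ⊤ := by norm_num
  constructor
  · intro h
    have h1 : L a b < ⊤ := lt_of_le_of_lt (le_max_left _ _) h
    have h2 : L b a < ⊤ := lt_of_le_of_lt (le_max_right _ _) h
    obtain ⟨v, ⟨x, y, ha, hb, rfl⟩, hv⟩ := sInf_lt_iff.mp h1
    obtain ⟨w, ⟨x', y', hb', ha', rfl⟩, hw⟩ := sInf_lt_iff.mp h2
    have hxy : ℓ x y ≤ 0 := (hrange x y).resolve_right (fun hh => absurd hh (ne_of_lt hv))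
    have hx'y' : ℓ x' y' ≤ 0 := (hrange x' y').resolve_right (fun hh => absurd hh (ne_of_lt hw))
    have hyx' : max (ℓ y x') (ℓ x' y) ≤ 0 := Quotient.exact (hb.symm.trans hb')
    have hy'x : max (ℓ y' x) (ℓ x y') ≤ 0 := Quotient.exact (ha'.symm.trans ha)
    have f1 : ℓ y x' ≤ 0 := le_trans (le_max_left _ _) hyx'
    have f2 : ℓ y' x ≤ 0 := le_trans (le_max_left _ _) hy'x
    have t1 : ℓ x' x ≤ ℓ x' y' + ℓ y' x :=
      htri _ _ _ hw (lt_of_le_of_lt f2 top0)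
    have hx'x : ℓ x' x ≤ 0 := le_trans t1 (add_nonpos hx'y' f2)
    have t2 : ℓ y x ≤ ℓ y x' + ℓ x' x :=
      htri _ _ _ (lt_of_le_of_lt f1 top0) (lt_of_le_of_lt hx'x top0)
    have hyx : ℓ y x ≤ 0 := le_trans t2 (add_nonpos f1 hx'x)
    have : max (ℓ x y) (ℓ y x) ≤ 0 := max_le hxy hyx
    rw [ha, hb]
    exact Quotient.sound this
  · rintro rfl
    have key : L a a ≤ 0 := by
      calc L a a ≤ ℓ a.out a.out :=
            sInf_le ⟨a.out, a.out, a.out_eq.symm, a.out_eq.symm, rfl⟩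
        _ ≤ 0 := hrefl _
    simpa using lt_of_le_of_lt key top0
end

section
/- Let ℓ be a time-separation function on M with ℓ⁻¹(-∞) = ∅, and let σ : [0,1] → M be a timelike ℓ-path, i.e., ℓ(σ(s),σ(t)) = (t-s)·ℓ(σ(0),σ(1)) with ℓ(σ(0),σ(1)) ∈ (-∞,0) for all 0 ≤ s < t ≤ 1. Then the Lorentzian length of σ equals ℓ(σ(0),σ(1)), and σ maximizes elapsed proper time: L_ℓ(σ̃) ≥ ℓ(σ(0),σ(1)) (i.e., |L_ℓ(σ̃)| ≤ |ℓ(σ(0),σ(1))|) for every causal path σ̃ from σ(0) to σ(1). -/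
open Set

/-- The Lorentzian length of a path `σ` over `[a,b]`: the supremum over all
finite partitions `a = s₀ < s₁ < ⋯ < s_N = b` of `Σᵢ ℓ(σ(sᵢ₋₁), σ(sᵢ))`. -/
noncomputable def LorLen {M : Type*} (ℓ : M → M → EReal) (σ : ℝ → M) (a b : ℝ) : EReal :=
  sSup {v : EReal | ∃ (N : ℕ) (s : ℕ → ℝ), s 0 = a ∧ s N = b ∧
    (∀ i < N, s i < s (i + 1)) ∧
    v = ∑ i ∈ Finset.range N, ℓ (σ (s i)) (σ (s (i + 1)))}

private lemma ereal_coe_sum (N : ℕ) (f : ℕ → ℝ) :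
    ((∑ i ∈ Finset.range N, f i : ℝ) : EReal) = ∑ i ∈ Finset.range N, ((f i : EReal)) := by
  induction N with
  | zero => simp
  | succ n ih => rw [Finset.sum_range_succ, Finset.sum_range_succ, EReal.coe_add, ih]

/-- a timelike ℓ-path has Lorentzian length ℓ(σ(0),σ(1)) and
maximizes elapsed proper time among causal paths with the same endpoints. -/
theorem stmt7 {M : Type*} (ℓ : M → M → EReal)
    (hrange : ∀ x y, ℓ x y ≤ 0 ∨ ℓ x y = ⊤)
    (hrefl : ∀ x, ℓ x x ≤ 0)
    (htri : ∀ x y z, ℓ x y < ⊤ → ℓ y z < ⊤ → ℓ x z ≤ ℓ x y + ℓ y z)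
    (hnobot : ∀ x y, ℓ x y ≠ ⊥)
    (σ : ℝ → M)
    (hT : ℓ (σ 0) (σ 1) < 0)
    (hpath : ∀ s t : ℝ, 0 ≤ s → s < t → t ≤ 1 →
      ℓ (σ s) (σ t) = ((t - s : ℝ) : EReal) * ℓ (σ 0) (σ 1)) :
    LorLen ℓ σ 0 1 = ℓ (σ 0) (σ 1) ∧
    ∀ σ' : ℝ → M, (∀ s t : ℝ, 0 ≤ s → s < t → t ≤ 1 → ℓ (σ' s) (σ' t) ≤ 0) →
      σ' 0 = σ 0 → σ' 1 = σ 1 → ℓ (σ 0) (σ 1) ≤ LorLen ℓ σ' 0 1 := by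
  obtain ⟨c, hc⟩ : ∃ c : ℝ, ℓ (σ 0) (σ 1) = (c : EReal) :=
    ⟨(ℓ (σ 0) (σ 1)).toReal, (EReal.coe_toReal hT.ne_top (hnobot _ _)).symm⟩
  -- the trivial partition witness
  have hwit : ∀ (τ : ℝ → M), (τ 0 = σ 0) → (τ 1 = σ 1) →
      ℓ (σ 0) (σ 1) ∈ {v : EReal | ∃ (N : ℕ) (s : ℕ → ℝ), s 0 = 0 ∧ s N = 1 ∧
        (∀ i < N, s i < s (i + 1)) ∧
        v = ∑ i ∈ Finset.range N, ℓ (τ (s i)) (τ (s (i + 1)))} := by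
    intro τ h0 h1
    refine ⟨1, fun i => (i : ℝ), by norm_num, by norm_num, ?_, ?_⟩
    · intro i hi
      interval_cases i
      norm_num
    · simp [h0, h1]
  constructor
  · apply le_antisymm
    · apply sSup_le
      rintro v ⟨N, s, hs0, hsN, hinc, rfl⟩
      -- bounds on the partition points
      have hlb : ∀ k, k ≤ N → 0 ≤ s k := by
        intro k hk
        induction k with
        | zero => rw [hs0]
        | succ n ih =>
          exact le_of_lt (lt_of_le_of_lt (ih (Nat.le_of_succ_le hk))
            (hinc n (Nat.lt_of_succ_le hk)))
      have hub : ∀ d k, k + d = N → s k ≤ 1 := by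
        intro d
        induction d with
        | zero =>
          intro k hk
          have hkN : k = N := by omega
          rw [hkN, hsN]
        | succ n ih =>
          intro k hk
          have h1 : s k < s (k + 1) := hinc k (by omega)
          have h2 : s (k + 1) ≤ 1 := ih (k + 1) (by omega)
          linarith
      have hterm : ∀ i ∈ Finset.range N,
          ℓ (σ (s i)) (σ (s (i + 1))) = (((s (i + 1) - s i) * c : ℝ) : EReal) := by
        intro i hi
        rw [Finset.mem_range] at hi
        rw [hpath (s i) (s (i+1)) (hlb i hi.le) (hinc i hi) (hub (N - (i+1)) (i+1) (by omega)),
          hc, EReal.coe_mul]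
      rw [Finset.sum_congr rfl hterm, ← ereal_coe_sum, ← Finset.sum_mul,
        Finset.sum_range_sub (fun i => s i), hs0, hsN, hc]
      norm_num
    · exact le_sSup (hwit σ rfl rfl)
  · intro σ' hσ' h0 h1
    exact le_sSup (hwit σ' h0 h1)
end

section
/- Let (M,d,ℓ) be a causally curve-connected, K-globally hyperbolic metric spacetime. Then each compact subset X ⊂ M admits a uniform bound C on the metric length L_d(σ) of every (possibly discontinuous) causal path σ : [0,1] → X. -/
open Set
open scoped ENNReal

/-- The metric length of a path `σ` over `[a,b]`: the supremum over finite
partitions of `Σᵢ d(σ(sᵢ₋₁), σ(sᵢ))` (valued in `ℝ≥0∞`). -/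
noncomputable def MetLen {M : Type*} [MetricSpace M] (σ : ℝ → M) (a b : ℝ) : ℝ≥0∞ :=
  sSup {v : ℝ≥0∞ | ∃ (N : ℕ) (s : ℕ → ℝ), s 0 = a ∧ s N = b ∧
    (∀ i < N, s i < s (i + 1)) ∧
    v = ∑ i ∈ Finset.range N, edist (σ (s i)) (σ (s (i + 1)))}

/-- A (rough, future-directed) causal path on `[0,1]`: no continuity assumed. -/
def IsCausalPath {M : Type*} (ℓ : M → M → EReal) (σ : ℝ → M) : Prop :=
  ∀ s t : ℝ, 0 ≤ s → s < t → t ≤ 1 → ℓ (σ s) (σ t) ≤ 0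

/-- A causal curve on `[0,1]`: a nonconstant causal path which is locally
Lipschitz with respect to the metric. -/
def IsCausalCurve {M : Type*} [MetricSpace M] (ℓ : M → M → EReal) (σ : ℝ → M) : Prop :=
  IsCausalPath ℓ σ ∧
  (∀ t ∈ Icc (0:ℝ) 1, ∃ (K : NNReal) (U : Set ℝ), U ∈ nhdsWithin t (Icc (0:ℝ) 1) ∧
    LipschitzOnWith K σ U) ∧
  (∃ s ∈ Icc (0:ℝ) 1, ∃ t ∈ Icc (0:ℝ) 1, σ s ≠ σ t)

/-! Fix a partition `0 = s₀ < ⋯ < s_N = 1` of a causal path `σ` in `X`. Consecutive points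
`σ sᵢ`, `σ sᵢ₊₁` are causally related, so causal curve-connectedness joins them by causal curves,
and the concatenation of these is one locally Lipschitz causal path through all the `σ sᵢ`.
Its endpoints lie in `X`, so it stays in the compact set `J(X,X)`, and non-total imprisonment
bounds its length, hence the partition sum, by a constant depending only on `X`. -/

open Filter

section Lipschitz

theorem LocallyLipschitzOn.congr {α β : Type*} [PseudoEMetricSpace α] [PseudoEMetricSpace β]
    {f g : α → β} {s : Set α} (hf : LocallyLipschitzOn s f) (hfg : EqOn f g s) :
    LocallyLipschitzOn s g := by
  intro x hx
  obtain ⟨K, u, hu, hfu⟩ := hf hx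
  refine ⟨K, u ∩ s, inter_mem hu self_mem_nhdsWithin, fun y hy z hz => ?_⟩
  rw [← hfg hy.2, ← hfg hz.2]
  exact hfu hy.1 hz.1

theorem LocallyLipschitzOn.comp_lipschitzWith {α β γ : Type*} [PseudoEMetricSpace α]
    [PseudoEMetricSpace β] [PseudoEMetricSpace γ] {f : β → γ} {φ : α → β} {Kφ : NNReal}
    {s : Set α} {t : Set β} (hf : LocallyLipschitzOn t f) (hφ : LipschitzWith Kφ φ)
    (hst : MapsTo φ s t) : LocallyLipschitzOn s (f ∘ φ) := by
  intro x hx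
  obtain ⟨K, u, hu, hfu⟩ := hf (hst hx)
  exact ⟨K * Kφ, φ ⁻¹' u, hφ.continuous.continuousWithinAt.tendsto_nhdsWithin hst hu,
    hfu.comp hφ.lipschitzOnWith (mapsTo_preimage φ u)⟩

variable {β : Type*} [PseudoMetricSpace β] {f : ℝ → β}

theorem LipschitzOnWith.union_of_le {K : NNReal} {s t : Set ℝ} {c : ℝ}
    (hs : LipschitzOnWith K f s) (ht : LipschitzOnWith K f t) (hcs : c ∈ s) (hct : c ∈ t)
    (hs_le : ∀ x ∈ s, x ≤ c) (ht_ge : ∀ y ∈ t, c ≤ y) :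
    LipschitzOnWith K f (s ∪ t) := by
  have across : ∀ x ∈ s, ∀ y ∈ t, dist (f x) (f y) ≤ K * dist x y := fun x hx y hy =>
    calc dist (f x) (f y) ≤ dist (f x) (f c) + dist (f c) (f y) := dist_triangle _ _ _
      _ ≤ K * dist x c + K * dist c y :=
        add_le_add (hs.dist_le_mul x hx c hcs) (ht.dist_le_mul c hct y hy)
      _ = K * dist x y := by
        have := hs_le x hx; have := ht_ge y hy
        rw [Real.dist_eq, Real.dist_eq, Real.dist_eq, abs_of_nonpos (by linarith),
          abs_of_nonpos (by linarith), abs_of_nonpos (by linarith)]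
        ring
  refine LipschitzOnWith.of_dist_le_mul fun x hx y hy => ?_
  rcases hx with hx | hx <;> rcases hy with hy | hy
  · exact hs.dist_le_mul x hx y hy
  · exact across x hx y hy
  · rw [dist_comm, dist_comm x]
    exact across y hy x hx
  · exact ht.dist_le_mul x hx y hy

theorem LocallyLipschitzOn.Icc_union {a b c : ℝ} (hac : LocallyLipschitzOn (Icc a c) f)
    (hcb : LocallyLipschitzOn (Icc c b) f) : LocallyLipschitzOn (Icc a b) f := by
  intro t ht
  rcases lt_trichotomy t c with htc | rfl | hct
  · obtain ⟨K, u, hu, hfu⟩ := hac ⟨ht.1, htc.le⟩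
    refine ⟨K, u, nhdsWithin_le_of_mem ?_ hu, hfu⟩
    exact mem_of_superset (inter_mem_nhdsWithin _ (Iio_mem_nhds htc))
      fun x hx => ⟨hx.1.1, le_of_lt hx.2⟩
  · obtain ⟨K₁, u₁, hu₁, hfu₁⟩ := hac ⟨ht.1, le_rfl⟩
    obtain ⟨K₂, u₂, hu₂, hfu₂⟩ := hcb ⟨le_rfl, ht.2⟩
    refine ⟨max K₁ K₂, u₁ ∩ Icc a t ∪ u₂ ∩ Icc t b, ?_, ?_⟩
    · rw [← Icc_union_Icc_eq_Icc ht.1 ht.2, nhdsWithin_union]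
      exact union_mem_sup (inter_mem hu₁ self_mem_nhdsWithin)
        (inter_mem hu₂ self_mem_nhdsWithin)
    · exact LipschitzOnWith.union_of_le
        ((hfu₁.mono inter_subset_left).weaken (le_max_left _ _))
        ((hfu₂.mono inter_subset_left).weaken (le_max_right _ _))
        ⟨mem_of_mem_nhdsWithin (right_mem_Icc.2 ht.1) hu₁, ht.1, le_rfl⟩
        ⟨mem_of_mem_nhdsWithin (left_mem_Icc.2 ht.2) hu₂, le_rfl, ht.2⟩
        (fun x hx => hx.2.2) (fun y hy => hy.2.1)
  · obtain ⟨K, u, hu, hfu⟩ := hcb ⟨hct.le, ht.2⟩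
    refine ⟨K, u, nhdsWithin_le_of_mem ?_ hu, hfu⟩
    exact mem_of_superset (inter_mem_nhdsWithin _ (Ioi_mem_nhds hct))
      fun x hx => ⟨le_of_lt hx.2, hx.1.2⟩

end Lipschitz

section Concat

variable {α : Type*} {f g : ℝ → α}

noncomputable def pathConcat (f g : ℝ → α) (t : ℝ) : α :=
  if t ≤ 1 / 2 then f (2 * t) else g (2 * t - 1)

theorem pathConcat_of_le {t : ℝ} (ht : t ≤ 1 / 2) : pathConcat f g t = f (2 * t) := if_pos ht

theorem pathConcat_of_ge (hfg : f 1 = g 0) {t : ℝ} (ht : 1 / 2 ≤ t) :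
    pathConcat f g t = g (2 * t - 1) := by
  rcases ht.eq_or_lt with rfl | ht
  · rw [pathConcat_of_le le_rfl]
    norm_num [hfg]
  · exact if_neg (not_le.2 ht)

theorem LocallyLipschitzOn.pathConcat [PseudoMetricSpace α]
    (hf : LocallyLipschitzOn (Icc 0 1) f) (hg : LocallyLipschitzOn (Icc 0 1) g)
    (hfg : f 1 = g 0) : LocallyLipschitzOn (Icc 0 1) (pathConcat f g) := by
  have hφ (c : ℝ) : LipschitzWith 2 fun t : ℝ => 2 * t - c :=
    LipschitzWith.of_dist_le_mul fun x y => by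
      rw [Real.dist_eq, Real.dist_eq, show 2 * x - c - (2 * y - c) = 2 * (x - y) by ring,
        abs_mul]
      norm_num
  refine LocallyLipschitzOn.Icc_union (c := 1 / 2) ?_ ?_
  · refine (hf.comp_lipschitzWith (hφ 0) fun t ht => ?_).congr fun t ht => ?_
    · exact ⟨by linarith [ht.1], by linarith [ht.2]⟩
    · simp [pathConcat_of_le ht.2]
  · refine (hg.comp_lipschitzWith (hφ 1) fun t ht => ?_).congr fun t ht => ?_
    · exact ⟨by linarith [ht.1], by linarith [ht.2]⟩
    · simp [pathConcat_of_ge hfg ht.1]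

end Concat

section Causal

variable {M : Type*} {ℓ : M → M → EReal} {σ f g : ℝ → M}

theorem IsCausalPath.le_zero_of_le (hrefl : ∀ x, ℓ x x ≤ 0) (hσ : IsCausalPath ℓ σ) {s t : ℝ}
    (hs : 0 ≤ s) (hst : s ≤ t) (ht : t ≤ 1) : ℓ (σ s) (σ t) ≤ 0 := by
  rcases hst.eq_or_lt with rfl | hst
  · exact hrefl _
  · exact hσ s t hs hst ht

theorem IsCausalPath.pathConcat (hrefl : ∀ x, ℓ x x ≤ 0)
    (htrans : ∀ x y z, ℓ x y ≤ 0 → ℓ y z ≤ 0 → ℓ x z ≤ 0)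
    (hf : IsCausalPath ℓ f) (hg : IsCausalPath ℓ g) (hfg : f 1 = g 0) :
    IsCausalPath ℓ (pathConcat f g) := by
  intro s t hs hst ht
  by_cases ht' : t ≤ 1 / 2
  · rw [pathConcat_of_le (hst.le.trans ht'), pathConcat_of_le ht']
    exact hf _ _ (by linarith) (by linarith) (by linarith)
  by_cases hs' : s ≤ 1 / 2
  · rw [pathConcat_of_le hs', pathConcat_of_ge hfg (by linarith)]
    refine htrans _ (f 1) _ (hf.le_zero_of_le hrefl (by linarith) (by linarith) le_rfl) ?_
    exact hfg ▸ hg.le_zero_of_le hrefl le_rfl (by linarith) (by linarith)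
  · rw [pathConcat_of_ge hfg (by linarith), pathConcat_of_ge hfg (by linarith)]
    exact hg _ _ (by linarith) (by linarith) (by linarith)

end Causal

theorem mem_Icc_of_lt_succ {β : Type*} [Preorder β] {N : ℕ} {s : ℕ → β}
    (hs : ∀ i < N, s i < s (i + 1)) {i : ℕ} (hi : i ≤ N) : s i ∈ Icc (s 0) (s N) := by
  have hmono := (strictMonoOn_Iic_of_lt_succ (ψ := s) fun m hm => by
    simpa only [Order.succ_eq_add_one] using hs m hm).monotoneOn
  exact ⟨hmono (mem_Iic.2 (Nat.zero_le N)) hi (Nat.zero_le i), hmono hi (mem_Iic.2 le_rfl) hi⟩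

section Length

variable {M : Type*} [MetricSpace M] {σ : ℝ → M} {a b : ℝ} {N : ℕ} {s : ℕ → ℝ}

theorem sum_edist_le_metLen (h0 : s 0 = a) (hN : s N = b) (hs : ∀ i < N, s i < s (i + 1)) :
    ∑ i ∈ Finset.range N, edist (σ (s i)) (σ (s (i + 1))) ≤ MetLen σ a b :=
  le_sSup ⟨N, s, h0, hN, hs, rfl⟩

theorem metLen_le {C : ℝ≥0∞}
    (h : ∀ (N : ℕ) (s : ℕ → ℝ), s 0 = a → s N = b → (∀ i < N, s i < s (i + 1)) →
      ∑ i ∈ Finset.range N, edist (σ (s i)) (σ (s (i + 1))) ≤ C) :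
    MetLen σ a b ≤ C :=
  sSup_le fun _ ⟨N, s, h0, hN, hs, hv⟩ => hv ▸ h N s h0 hN hs

theorem metLen_eq_zero (hσ : ∀ x ∈ Icc a b, ∀ y ∈ Icc a b, σ x = σ y) : MetLen σ a b = 0 := by
  refine nonpos_iff_eq_zero.1 (metLen_le fun N s h0 hN hs => ?_)
  refine (Finset.sum_eq_zero fun i hi => ?_).le
  have hi := Finset.mem_range.1 hi
  rw [hσ _ (h0 ▸ hN ▸ mem_Icc_of_lt_succ hs hi.le) _ (h0 ▸ hN ▸ mem_Icc_of_lt_succ hs hi),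
    edist_self]

end Length

section Spacetime

variable {M : Type*} {ℓ : M → M → EReal}

/-- `J(X,Y) = J⁺(X) ∩ J⁻(Y)`. -/
def causalDiamond (ℓ : M → M → EReal) (X Y : Set M) : Set M :=
  {z | ∃ x ∈ X, ℓ x z ≤ 0} ∩ {z | ∃ y ∈ Y, ℓ z y ≤ 0}

theorem IsCausalPath.mem_causalDiamond (hrefl : ∀ x, ℓ x x ≤ 0) {σ : ℝ → M}
    (hσ : IsCausalPath ℓ σ) {X Y : Set M} (h0 : σ 0 ∈ X) (h1 : σ 1 ∈ Y) {t : ℝ}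
    (ht : t ∈ Icc 0 1) : σ t ∈ causalDiamond ℓ X Y :=
  ⟨⟨σ 0, h0, hσ.le_zero_of_le hrefl le_rfl ht.1 ht.2⟩,
    ⟨σ 1, h1, hσ.le_zero_of_le hrefl ht.1 ht.2 le_rfl⟩⟩

theorem metLen_le_of_isCausalPath [MetricSpace M] {K : Set M} {C : ℝ≥0∞}
    (hC : ∀ σ : ℝ → M, IsCausalCurve ℓ σ → (∀ t ∈ Icc (0 : ℝ) 1, σ t ∈ K) → MetLen σ 0 1 ≤ C)
    {τ : ℝ → M} (hτ : IsCausalPath ℓ τ) (hlip : LocallyLipschitzOn (Icc 0 1) τ)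
    (hK : ∀ t ∈ Icc (0 : ℝ) 1, τ t ∈ K) : MetLen τ 0 1 ≤ C := by
  by_cases hconst : ∃ s ∈ Icc (0 : ℝ) 1, ∃ t ∈ Icc (0 : ℝ) 1, τ s ≠ τ t
  · exact hC τ ⟨hτ, fun t ht => hlip ht, hconst⟩ hK
  · push Not at hconst
    exact (metLen_eq_zero hconst).trans_le zero_le

theorem exists_causalPath_of_curveConnected [MetricSpace M] (hrefl : ∀ x, ℓ x x ≤ 0)
    (hccc : ∀ x y : M, ℓ x y ≤ 0 → x ≠ y → ∃ σ : ℝ → M, IsCausalCurve ℓ σ ∧ σ 0 = x ∧ σ 1 = y)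
    {x y : M} (hxy : ℓ x y ≤ 0) : ∃ γ : ℝ → M,
      IsCausalPath ℓ γ ∧ LocallyLipschitzOn (Icc 0 1) γ ∧ γ 0 = x ∧ γ 1 = y := by
  by_cases hne : x = y
  · exact ⟨fun _ => x, fun _ _ _ _ _ => hrefl x,
      (LocallyLipschitz.const x).locallyLipschitzOn, rfl, hne⟩
  · obtain ⟨γ, ⟨hγ, hγlip, -⟩, hγ0, hγ1⟩ := hccc x y hxy hne
    exact ⟨γ, hγ, fun t ht => hγlip t ht, hγ0, hγ1⟩

theorem exists_causalPath_through_chain [MetricSpace M] (hrefl : ∀ x, ℓ x x ≤ 0)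
    (htrans : ∀ x y z, ℓ x y ≤ 0 → ℓ y z ≤ 0 → ℓ x z ≤ 0)
    (hconn : ∀ x y, ℓ x y ≤ 0 → ∃ γ : ℝ → M,
      IsCausalPath ℓ γ ∧ LocallyLipschitzOn (Icc 0 1) γ ∧ γ 0 = x ∧ γ 1 = y)
    (N : ℕ) (x : ℕ → M) (hx : ∀ i ≤ N, ℓ (x i) (x (i + 1)) ≤ 0) :
    ∃ τ : ℝ → M, IsCausalPath ℓ τ ∧ LocallyLipschitzOn (Icc 0 1) τ ∧
      ∃ u : ℕ → ℝ, StrictMono u ∧ u 0 = 0 ∧ u (N + 1) = 1 ∧ ∀ i ≤ N + 1, τ (u i) = x i := by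
  induction N generalizing x with
  | zero =>
    obtain ⟨γ, hγ, hγlip, hγ0, hγ1⟩ := hconn _ _ (hx 0 le_rfl)
    refine ⟨γ, hγ, hγlip, Nat.cast, Nat.strictMono_cast, Nat.cast_zero, Nat.cast_one, ?_⟩
    intro i hi
    interval_cases i <;> simpa
  | succ n ih =>
    obtain ⟨τ, hτ, hτlip, u, hu, hu0, hu1, hτu⟩ :=
      ih (fun i => x (i + 1)) fun i hi => hx (i + 1) (by omega)
    obtain ⟨γ, hγ, hγlip, hγ0, hγ1⟩ := hconn _ _ (hx 0 (Nat.zero_le _))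
    have hγτ : γ 1 = τ 0 := by rw [hγ1, ← hu0, hτu 0 (Nat.zero_le _)]
    -- prepend `γ` on `[0, 1/2]`; the old partition points move to `(1 + u i) / 2`
    let u' : ℕ → ℝ := fun
      | 0 => 0
      | i + 1 => (1 + u i) / 2
    refine ⟨pathConcat γ τ, hγ.pathConcat hrefl htrans hτ hγτ,
      hγlip.pathConcat hτlip hγτ, u', strictMono_nat_of_lt_succ fun i => ?_, rfl, ?_, ?_⟩
    · cases i with
      | zero => simp [u', hu0]
      | succ i =>
        have := hu (Nat.lt_succ_self i)
        simp only [u']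
        linarith
    · simp [u', hu1]
    · rintro (_ | i) hi
      · simp [u', pathConcat_of_le, hγ0]
      · have hui : 0 ≤ u i := hu0 ▸ hu.monotone (Nat.zero_le i)
        rw [show u' (i + 1) = (1 + u i) / 2 from rfl, pathConcat_of_ge hγτ (by linarith),
          show 2 * ((1 + u i) / 2) - 1 = u i by ring]
        exact hτu i (by omega)

end Spacetime

theorem stmt10_general {M : Type*} [MetricSpace M] (ℓ : M → M → EReal)
    (hrefl : ∀ x, ℓ x x ≤ 0)
    (htri : ∀ x y z, ℓ x y < ⊤ → ℓ y z < ⊤ → ℓ x z ≤ ℓ x y + ℓ y z)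
    -- causally curve-connected:
    (hccc : ∀ x y : M, ℓ x y ≤ 0 → x ≠ y →
      ∃ σ : ℝ → M, IsCausalCurve ℓ σ ∧ σ 0 = x ∧ σ 1 = y)
    -- non-totally imprisoning:
    (hnti : ∀ K : Set M, IsCompact K → ∃ C : ℝ≥0∞, C ≠ ⊤ ∧
      ∀ σ : ℝ → M, IsCausalCurve ℓ σ → (∀ t ∈ Icc (0:ℝ) 1, σ t ∈ K) →
        MetLen σ 0 1 ≤ C)
    -- compactness of J(X,Y) = J⁺(X) ∩ J⁻(Y) for compact X, Y:
    (hKgh : ∀ X Y : Set M, IsCompact X → IsCompact Y →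
      IsCompact ({z | ∃ x ∈ X, ℓ x z ≤ 0} ∩ {z | ∃ y ∈ Y, ℓ z y ≤ 0}))
    (X : Set M) (hX : IsCompact X) :
    ∃ C : ℝ≥0∞, C ≠ ⊤ ∧ ∀ σ : ℝ → M, IsCausalPath ℓ σ →
      (∀ t ∈ Icc (0:ℝ) 1, σ t ∈ X) → MetLen σ 0 1 ≤ C := by
  have htrans (x y z : M) (hxy : ℓ x y ≤ 0) (hyz : ℓ y z ≤ 0) : ℓ x z ≤ 0 := by
    have := htri x y z (hxy.trans_lt EReal.zero_lt_top) (hyz.trans_lt EReal.zero_lt_top)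
    exact this.trans (add_nonpos hxy hyz)
  obtain ⟨C, hC_ne, hC⟩ := hnti (causalDiamond ℓ X X) (hKgh X X hX hX)
  refine ⟨C, hC_ne, fun σ hσ hσX => metLen_le fun N s hs0 hsN hs => ?_⟩
  obtain _ | n := N
  · simp
  have hsI (i : ℕ) (hi : i ≤ n + 1) : s i ∈ Icc 0 1 := hs0 ▸ hsN ▸ mem_Icc_of_lt_succ hs hi
  obtain ⟨τ, hτ, hτlip, u, hu, hu0, hu1, hτu⟩ :=
    exists_causalPath_through_chain hrefl htrans
      (fun _ _ => exists_causalPath_of_curveConnected hrefl hccc) n (σ ∘ s)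
      fun i hi => hσ _ _ (hsI i (by omega)).1 (hs i (by omega)) (hsI (i + 1) (by omega)).2
  have hτ0 : τ 0 ∈ X := by
    simpa [← hu0, hτu 0 (Nat.zero_le _), hs0] using hσX 0 (left_mem_Icc.2 zero_le_one)
  have hτ1 : τ 1 ∈ X := by
    simpa [← hu1, hτu (n + 1) le_rfl, hsN] using hσX 1 (right_mem_Icc.2 zero_le_one)
  calc ∑ i ∈ Finset.range (n + 1), edist (σ (s i)) (σ (s (i + 1)))
      = ∑ i ∈ Finset.range (n + 1), edist (τ (u i)) (τ (u (i + 1))) :=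
        Finset.sum_congr rfl fun i hi => by
          have hi := Finset.mem_range.1 hi
          rw [hτu i (by omega), hτu (i + 1) (by omega)]
          rfl
    _ ≤ MetLen τ 0 1 := sum_edist_le_metLen hu0 hu1 fun i _ => hu (Nat.lt_succ_self i)
    _ ≤ C := metLen_le_of_isCausalPath hC hτ hτlip fun t ht =>
        hτ.mem_causalDiamond hrefl hτ0 hτ1 ht

/-- in a causally curve-connected, K-globally hyperbolic metric
spacetime, each compact set X admits a uniform bound on the d-length of all
(possibly discontinuous) causal paths with values in X. -/
theorem stmt10 {M : Type*} [MetricSpace M] (ℓ : M → M → EReal)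
    (hrange : ∀ x y, ℓ x y ≤ 0 ∨ ℓ x y = ⊤)
    (hrefl : ∀ x, ℓ x x ≤ 0)
    (htri : ∀ x y z, ℓ x y < ⊤ → ℓ y z < ⊤ → ℓ x z ≤ ℓ x y + ℓ y z)
    -- causally curve-connected:
    (hccc : ∀ x y : M, ℓ x y ≤ 0 → x ≠ y →
      ∃ σ : ℝ → M, IsCausalCurve ℓ σ ∧ σ 0 = x ∧ σ 1 = y)
    -- non-totally imprisoning:
    (hnti : ∀ K : Set M, IsCompact K → ∃ C : ℝ≥0∞, C ≠ ⊤ ∧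
      ∀ σ : ℝ → M, IsCausalCurve ℓ σ → (∀ t ∈ Icc (0:ℝ) 1, σ t ∈ K) →
        MetLen σ 0 1 ≤ C)
    -- compactness of J(X,Y) = J⁺(X) ∩ J⁻(Y) for compact X, Y:
    (hKgh : ∀ X Y : Set M, IsCompact X → IsCompact Y →
      IsCompact ({z | ∃ x ∈ X, ℓ x z ≤ 0} ∩ {z | ∃ y ∈ Y, ℓ z y ≤ 0}))
    (X : Set M) (hX : IsCompact X) :
    ∃ C : ℝ≥0∞, C ≠ ⊤ ∧ ∀ σ : ℝ → M, IsCausalPath ℓ σ →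
      (∀ t ∈ Icc (0:ℝ) 1, σ t ∈ X) → MetLen σ 0 1 ≤ C :=
  stmt10_general ℓ hrefl htri hccc hnti hKgh X hX
end

section
/- Let (M,d) be a Polish metric space, ℓ a time-separation function on M, and q ∈ (0,1]. Define ℓ_q(μ,ν) := inf over causal couplings γ ∈ Γ_≤(μ,ν) of -(∫ |ℓ(x,y)|^q dγ)^{1/q}, with ℓ_q(μ,ν) = +∞ if no causal coupling exists. Then ℓ_q satisfies the triangle inequality: ℓ_q(μ₀,μ₂) ≤ ℓ_q(μ₀,μ₁) + ℓ_q(μ₁,μ₂) whenever both terms on the right are finite. -/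
/-!
Glue a causal coupling of `(μ₀, μ₁)` and one of `(μ₁, μ₂)` along `μ₁` (disintegration on a
standard Borel space) into a law `θ` on `M × M × M`, and push it forward to the outer coordinates.
The reverse triangle inequality for `ℓ` gives, θ-a.e., `|ℓ(x₀,x₂)| ≥ |ℓ(x₀,x₁)| + |ℓ(x₁,x₂)|`,
and for `q ≤ 1` the functional `f ↦ (∫ f^q)^{1/q}` is superadditive (reverse Minkowski), so the
cost of the glued coupling is at most the sum of the two costs. Taking infima concludes.
-/

open Set MeasureTheory
open scoped ENNReal

/-- A causal coupling of μ and ν: a coupling giving full mass to {ℓ ≤ 0}. -/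
def IsCausalCoupling {M : Type*} [MeasurableSpace M] (ℓ : M → M → EReal)
    (μ ν : Measure M) (γ : Measure (M × M)) : Prop :=
  γ.map Prod.fst = μ ∧ γ.map Prod.snd = ν ∧ γ {p : M × M | ℓ p.1 p.2 ≤ 0} = 1

/-- The cost `-(∫ |ℓ|^q dγ)^{1/q}` of a coupling γ, valued in EReal. -/
noncomputable def lqCost {M : Type*} [MeasurableSpace M] (ℓ : M → M → EReal)
    (q : ℝ) (γ : Measure (M × M)) : EReal :=
  -((((∫⁻ p, (ENNReal.ofReal (-(ℓ p.1 p.2)).toReal) ^ q ∂γ) ^ (1 / q) : ℝ≥0∞) : EReal))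

/-- The q-Lorentz–Wasserstein time separation `ℓ_q(μ,ν)`; it equals `+∞` when no
causal coupling exists. -/
noncomputable def lqSep {M : Type*} [MeasurableSpace M] (ℓ : M → M → EReal)
    (q : ℝ) (μ ν : Measure M) : EReal :=
  sInf {v : EReal | ∃ γ : Measure (M × M), IsCausalCoupling ℓ μ ν γ ∧ v = lqCost ℓ q γ}

open ProbabilityTheory
open scoped NNReal

lemma NNReal.mul_div_rpow_eq {c : ℝ≥0} (hc : c ≠ 0) (x : ℝ≥0) (q : ℝ) :
    c * (x / c) ^ q = c ^ (1 - q) * x ^ q := by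
  rw [NNReal.div_rpow, NNReal.rpow_sub hc, NNReal.rpow_one]
  ring

lemma NNReal.rpow_one_sub_mul_rpow_add_le {q : ℝ} (hq0 : 0 ≤ q) (hq1 : q ≤ 1) {s t : ℝ≥0}
    (hs : s ≠ 0) (ht : t ≠ 0) (a b : ℝ≥0) :
    s ^ (1 - q) * a ^ q + t ^ (1 - q) * b ^ q ≤ (s + t) ^ (1 - q) * (a + b) ^ q := by
  have hst : s + t ≠ 0 := by positivity
  have h := (NNReal.concaveOn_rpow hq0 hq1).2 (mem_univ (a / s)) (mem_univ (b / t))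
    (zero_le (a := s / (s + t))) (zero_le (a := t / (s + t))) (by field_simp)
  simp only [smul_eq_mul] at h
  have hab : s / (s + t) * (a / s) + t / (s + t) * (b / t) = (a + b) / (s + t) := by
    field_simp
  rw [hab] at h
  rw [← NNReal.mul_div_rpow_eq hs, ← NNReal.mul_div_rpow_eq ht, ← NNReal.mul_div_rpow_eq hst]
  calc s * (a / s) ^ q + t * (b / t) ^ q
      = (s + t) * (s / (s + t) * (a / s) ^ q + t / (s + t) * (b / t) ^ q) := by
        field_simp
    _ ≤ (s + t) * ((a + b) / (s + t)) ^ q := by gcongr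

lemma ENNReal.rpow_one_sub_mul_rpow_add_le {q : ℝ} (hq0 : 0 < q) (hq1 : q ≤ 1) {s t : ℝ≥0∞}
    (hs : s ≠ 0) (ht : t ≠ 0) (hs' : s ≠ ∞) (ht' : t ≠ ∞) (a b : ℝ≥0∞) :
    s ^ (1 - q) * a ^ q + t ^ (1 - q) * b ^ q ≤ (s + t) ^ (1 - q) * (a + b) ^ q := by
  have hst : (s + t) ^ (1 - q) ≠ 0 := by simp [hs, hs', ht']
  rcases eq_or_ne a ∞ with rfl | ha
  · simp [ENNReal.top_rpow_of_pos hq0, ENNReal.mul_top hst]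
  rcases eq_or_ne b ∞ with rfl | hb
  · simp [ENNReal.top_rpow_of_pos hq0, ENNReal.mul_top hst]
  lift s to ℝ≥0 using hs'
  lift t to ℝ≥0 using ht'
  lift a to ℝ≥0 using ha
  lift b to ℝ≥0 using hb
  simp only [← ENNReal.coe_add, ← ENNReal.coe_rpow_of_nonneg _ hq0.le,
    ← ENNReal.coe_rpow_of_nonneg _ (sub_nonneg.2 hq1), ← ENNReal.coe_mul]
  exact_mod_cast NNReal.rpow_one_sub_mul_rpow_add_le hq0.le hq1 (mod_cast hs) (mod_cast ht) a b

theorem ENNReal.lintegral_Lp_add_ge_of_le_one {α : Type*} [MeasurableSpace α] {μ : Measure α}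
    {p : ℝ} {f g : α → ℝ≥0∞} (hf : AEMeasurable f μ) (hp0 : 0 < p) (hp1 : p ≤ 1) :
    (∫⁻ a, f a ^ p ∂μ) ^ (1 / p) + (∫⁻ a, g a ^ p ∂μ) ^ (1 / p) ≤
      (∫⁻ a, (f a + g a) ^ p ∂μ) ^ (1 / p) := by
  set C := ∫⁻ a, (f a + g a) ^ p ∂μ
  have hfC : (∫⁻ a, f a ^ p ∂μ) ^ (1 / p) ≤ C ^ (1 / p) := by
    gcongr ?_ ^ _
    exact lintegral_mono fun a ↦ by gcongr; exact le_self_add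
  have hgC : (∫⁻ a, g a ^ p ∂μ) ^ (1 / p) ≤ C ^ (1 / p) := by
    gcongr ?_ ^ _
    exact lintegral_mono fun a ↦ by gcongr; exact le_add_self
  set u := (∫⁻ a, f a ^ p ∂μ) ^ (1 / p) with hu_def
  set v := (∫⁻ a, g a ^ p ∂μ) ^ (1 / p) with hv_def
  rcases eq_or_ne u 0 with hu | hu
  · rwa [hu, zero_add]
  rcases eq_or_ne v 0 with hv | hv
  · rwa [hv, add_zero]
  rcases eq_or_ne u ∞ with hu' | hu'
  · rw [hu', top_add]; exact hu' ▸ hfC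
  rcases eq_or_ne v ∞ with hv' | hv'
  · rw [hv', add_top]; exact hv' ▸ hgC
  have hf_eq : ∫⁻ a, f a ^ p ∂μ = u ^ p := by
    rw [hu_def, ← ENNReal.rpow_mul, one_div_mul_cancel hp0.ne', ENNReal.rpow_one]
  have hg_eq : ∫⁻ a, g a ^ p ∂μ = v ^ p := by
    rw [hv_def, ← ENNReal.rpow_mul, one_div_mul_cancel hp0.ne', ENNReal.rpow_one]
  have hp1' : 0 ≤ 1 - p := sub_nonneg.2 hp1
  have huv' : u + v ≠ ∞ := ENNReal.add_ne_top.2 ⟨hu', hv'⟩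
  -- integrate the two-point inequality with weights `u, v` at the points `f a, g a`
  have key : (u + v) ^ (1 - p) * (u + v) ^ p ≤ (u + v) ^ (1 - p) * C := calc
    (u + v) ^ (1 - p) * (u + v) ^ p = u ^ (1 - p) * u ^ p + v ^ (1 - p) * v ^ p := by
      simp only [← ENNReal.rpow_add _ _ (by positivity) huv', ← ENNReal.rpow_add _ _ hu hu',
        ← ENNReal.rpow_add _ _ hv hv', sub_add_cancel, ENNReal.rpow_one]
    _ = ∫⁻ a, u ^ (1 - p) * f a ^ p + v ^ (1 - p) * g a ^ p ∂μ := by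
      rw [lintegral_add_left' ((hf.pow_const p).const_mul _),
        lintegral_const_mul'' _ (hf.pow_const p),
        lintegral_const_mul' _ _ (ENNReal.rpow_ne_top_of_nonneg hp1' hv'), hf_eq, hg_eq]
    _ ≤ ∫⁻ a, (u + v) ^ (1 - p) * (f a + g a) ^ p ∂μ :=
      lintegral_mono fun a ↦ ENNReal.rpow_one_sub_mul_rpow_add_le hp0 hp1 hu hv hu' hv' _ _
    _ = (u + v) ^ (1 - p) * C :=
      lintegral_const_mul' _ _ (ENNReal.rpow_ne_top_of_nonneg hp1' huv')
  have hpC : (u + v) ^ p ≤ C :=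
    (ENNReal.mul_le_mul_iff_right (by positivity) (ENNReal.rpow_ne_top_of_nonneg hp1' huv')).1 key
  calc u + v = ((u + v) ^ p) ^ (1 / p) := by
        rw [← ENNReal.rpow_mul, mul_one_div_cancel hp0.ne', ENNReal.rpow_one]
    _ ≤ C ^ (1 / p) := by gcongr

lemma EReal.le_sInf_add_sInf {A B : Set EReal} {c : EReal} (hA : sInf A ≠ ⊤) (hB : sInf B ≠ ⊤)
    (h : ∀ a ∈ A, ∀ b ∈ B, c ≤ a + b) : c ≤ sInf A + sInf B := by
  refine EReal.le_add_of_forall_gt (.inr hB) (.inl hA) fun a' ha' b' hb' ↦ ?_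
  obtain ⟨a, ha, haa'⟩ := sInf_lt_iff.1 ha'
  obtain ⟨b, hb, hbb'⟩ := sInf_lt_iff.1 hb'
  exact (h a ha b hb).trans (add_le_add haa'.le hbb'.le)

lemma EReal.ofReal_toReal_neg_add_le {a b c : EReal} (ha : a ≤ 0) (hb : b ≤ 0) (hc : c ≠ ⊥)
    (h : c ≤ a + b) :
    ENNReal.ofReal (-a).toReal + ENNReal.ofReal (-b).toReal ≤ ENNReal.ofReal (-c).toReal := by
  induction a using EReal.rec <;> induction b using EReal.rec <;> induction c using EReal.rec <;>
    simp_all [← EReal.coe_add]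
  rw [← ENNReal.ofReal_add (by linarith) (by linarith)]
  exact ENNReal.ofReal_le_ofReal (by linarith)

theorem MeasureTheory.Measure.exists_map_eq_of_snd_eq_fst {X Y Z : Type*}
    [MeasurableSpace X] [MeasurableSpace Y] [MeasurableSpace Z]
    [StandardBorelSpace X] [Nonempty X] [StandardBorelSpace Z] [Nonempty Z]
    (γ₁ : Measure (X × Y)) (γ₂ : Measure (Y × Z)) [IsFiniteMeasure γ₁] [IsFiniteMeasure γ₂]
    (h : γ₁.snd = γ₂.fst) :
    ∃ θ : Measure (X × Y × Z), θ.map (fun p ↦ (p.1, p.2.1)) = γ₁ ∧ θ.map Prod.snd = γ₂ := by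
  -- the law of `(x, y, z)` with `x` and `z` conditionally independent given `y`
  set κ := (γ₁.map Prod.swap).condKernel
  set η := γ₂.condKernel
  have hκ : γ₂.fst ⊗ₘ κ = γ₁.map Prod.swap := by
    rw [← h, ← Measure.fst_map_swap]; exact Measure.disintegrate _ _
  have hη : γ₂.fst ⊗ₘ η = γ₂ := Measure.disintegrate _ _
  refine ⟨(γ₂.fst ⊗ₘ (κ ×ₖ η)).map (fun p ↦ (p.2.1, p.1, p.2.2)), ?_, ?_⟩
  · rw [Measure.map_map (by fun_prop) (by fun_prop)]
    have : (fun p : X × Y × Z ↦ (p.1, p.2.1)) ∘ (fun p : Y × X × Z ↦ (p.2.1, p.1, p.2.2))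
        = Prod.swap ∘ Prod.map id Prod.fst := rfl
    rw [this, ← Measure.map_map (by fun_prop) (by fun_prop), ← Measure.compProd_map measurable_fst,
      ← Kernel.fst_eq, Kernel.fst_prod, hκ, Measure.map_map (by fun_prop) (by fun_prop),
      Prod.swap_swap_eq, Measure.map_id]
  · rw [Measure.map_map (by fun_prop) (by fun_prop)]
    have : Prod.snd ∘ (fun p : Y × X × Z ↦ (p.2.1, p.1, p.2.2)) = Prod.map id Prod.snd := rfl
    rw [this, ← Measure.compProd_map measurable_snd, ← Kernel.snd_eq, Kernel.snd_prod, hη]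

section CausalCoupling

variable {M : Type*} {ℓ : M → M → EReal}

noncomputable def absTimeSep (ℓ : M → M → EReal) (p : M × M) : ℝ≥0∞ :=
  ENNReal.ofReal (-(ℓ p.1 p.2)).toReal

lemma absTimeSep_add_le (htri : ∀ x y z, ℓ x y < ⊤ → ℓ y z < ⊤ → ℓ x z ≤ ℓ x y + ℓ y z)
    (hnobot : ∀ x y, ℓ x y ≠ ⊥) {x y z : M} (hxy : ℓ x y ≤ 0) (hyz : ℓ y z ≤ 0) :
    absTimeSep ℓ (x, y) + absTimeSep ℓ (y, z) ≤ absTimeSep ℓ (x, z) :=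
  EReal.ofReal_toReal_neg_add_le hxy hyz (hnobot x z)
    (htri x y z (hxy.trans_lt EReal.zero_lt_top) (hyz.trans_lt EReal.zero_lt_top))

lemma le_zero_of_le_zero_of_le_zero
    (htri : ∀ x y z, ℓ x y < ⊤ → ℓ y z < ⊤ → ℓ x z ≤ ℓ x y + ℓ y z) {x y z : M}
    (hxy : ℓ x y ≤ 0) (hyz : ℓ y z ≤ 0) : ℓ x z ≤ 0 :=
  (htri x y z (hxy.trans_lt EReal.zero_lt_top) (hyz.trans_lt EReal.zero_lt_top)).trans
    (add_nonpos hxy hyz)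

variable [MeasurableSpace M] {μ ν : Measure M} {γ : Measure (M × M)}

lemma lqCost_eq (q : ℝ) (γ : Measure (M × M)) :
    lqCost ℓ q γ = -(((∫⁻ p, absTimeSep ℓ p ^ q ∂γ) ^ (1 / q) : ℝ≥0∞) : EReal) :=
  rfl

lemma lqSep_le_lqCost {q : ℝ} (h : IsCausalCoupling ℓ μ ν γ) : lqSep ℓ q μ ν ≤ lqCost ℓ q γ :=
  sInf_le ⟨γ, h, rfl⟩

lemma lqCost_le_add_of_le {q : ℝ} {γ₁ γ₂ : Measure (M × M)}
    (h : (∫⁻ p, absTimeSep ℓ p ^ q ∂γ₁) ^ (1 / q) + (∫⁻ p, absTimeSep ℓ p ^ q ∂γ₂) ^ (1 / q)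
      ≤ (∫⁻ p, absTimeSep ℓ p ^ q ∂γ) ^ (1 / q)) :
    lqCost ℓ q γ ≤ lqCost ℓ q γ₁ + lqCost ℓ q γ₂ := by
  rw [lqCost_eq, lqCost_eq, lqCost_eq, ← sub_eq_add_neg, ← EReal.neg_add
    (.inl (EReal.coe_ennreal_ne_bot _)) (.inr (EReal.coe_ennreal_ne_bot _)),
    EReal.neg_le_neg_iff, ← EReal.coe_ennreal_add]
  exact_mod_cast h

lemma IsCausalCoupling.isProbabilityMeasure [IsProbabilityMeasure μ]
    (h : IsCausalCoupling ℓ μ ν γ) : IsProbabilityMeasure γ :=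
  have : IsProbabilityMeasure (γ.map Prod.fst) := h.1 ▸ inferInstance
  Measure.isProbabilityMeasure_of_map Prod.fst

lemma IsCausalCoupling.ae_le_zero [IsProbabilityMeasure μ]
    (hmeas : Measurable fun p : M × M ↦ ℓ p.1 p.2) (h : IsCausalCoupling ℓ μ ν γ) :
    ∀ᵐ p ∂γ, ℓ p.1 p.2 ≤ 0 :=
  have := h.isProbabilityMeasure
  (mem_ae_iff_prob_eq_one (measurableSet_le hmeas measurable_const)).2 h.2.2

lemma isCausalCoupling_of_ae_le_zero [IsProbabilityMeasure γ]
    (hmeas : Measurable fun p : M × M ↦ ℓ p.1 p.2) (h₁ : γ.map Prod.fst = μ)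
    (h₂ : γ.map Prod.snd = ν) (h : ∀ᵐ p ∂γ, ℓ p.1 p.2 ≤ 0) : IsCausalCoupling ℓ μ ν γ :=
  ⟨h₁, h₂, (mem_ae_iff_prob_eq_one (measurableSet_le hmeas measurable_const)).1 h⟩

end CausalCoupling

section Composition

variable {M : Type*} [MeasurableSpace M] [StandardBorelSpace M] {ℓ : M → M → EReal}
  {μ₀ μ₁ μ₂ : Measure M} {γ₀₁ γ₁₂ : Measure (M × M)}

theorem IsCausalCoupling.exists_lqCost_le
    (htri : ∀ x y z, ℓ x y < ⊤ → ℓ y z < ⊤ → ℓ x z ≤ ℓ x y + ℓ y z)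
    (hnobot : ∀ x y, ℓ x y ≠ ⊥) (hmeas : Measurable fun p : M × M ↦ ℓ p.1 p.2)
    {q : ℝ} (hq0 : 0 < q) (hq1 : q ≤ 1) [IsProbabilityMeasure μ₀] [IsProbabilityMeasure μ₁]
    (h₀₁ : IsCausalCoupling ℓ μ₀ μ₁ γ₀₁) (h₁₂ : IsCausalCoupling ℓ μ₁ μ₂ γ₁₂) :
    ∃ γ₀₂, IsCausalCoupling ℓ μ₀ μ₂ γ₀₂ ∧ lqCost ℓ q γ₀₂ ≤ lqCost ℓ q γ₀₁ + lqCost ℓ q γ₁₂ := by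
  have := h₀₁.isProbabilityMeasure
  have := h₁₂.isProbabilityMeasure
  have := nonempty_of_isProbabilityMeasure μ₀
  obtain ⟨θ, hθ₀₁, hθ₁₂⟩ := Measure.exists_map_eq_of_snd_eq_fst γ₀₁ γ₁₂ (h₀₁.2.1.trans h₁₂.1.symm)
  have : IsProbabilityMeasure θ :=
    have : IsProbabilityMeasure (θ.map Prod.snd) := hθ₁₂ ▸ inferInstance
    Measure.isProbabilityMeasure_of_map Prod.snd
  have hm₀₁ : Measurable fun p : M × M × M ↦ (p.1, p.2.1) := by fun_prop
  have hm₀₂ : Measurable fun p : M × M × M ↦ (p.1, p.2.2) := by fun_prop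
  have hF : Measurable (absTimeSep ℓ) := by unfold absTimeSep; fun_prop
  have hcausal : ∀ᵐ p ∂θ, ℓ p.1 p.2.1 ≤ 0 ∧ ℓ p.2.1 p.2.2 ≤ 0 := by
    have h₀₁' := ae_map_iff hm₀₁.aemeasurable (measurableSet_le hmeas measurable_const)
      |>.1 (hθ₀₁ ▸ h₀₁.ae_le_zero hmeas)
    have h₁₂' := ae_map_iff measurable_snd.aemeasurable (measurableSet_le hmeas measurable_const)
      |>.1 (hθ₁₂ ▸ h₁₂.ae_le_zero hmeas)
    filter_upwards [h₀₁', h₁₂'] with p hp₀₁ hp₁₂ using ⟨hp₀₁, hp₁₂⟩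
  have := Measure.isProbabilityMeasure_map (μ := θ) hm₀₂.aemeasurable
  refine ⟨θ.map fun p ↦ (p.1, p.2.2), isCausalCoupling_of_ae_le_zero hmeas ?_ ?_ ?_, ?_⟩
  · rw [Measure.map_map measurable_fst hm₀₂, ← h₀₁.1, ← hθ₀₁, Measure.map_map measurable_fst hm₀₁]
    rfl
  · rw [Measure.map_map measurable_snd hm₀₂, ← h₁₂.2.1, ← hθ₁₂,
      Measure.map_map measurable_snd measurable_snd]
    rfl
  · refine (ae_map_iff hm₀₂.aemeasurable (measurableSet_le hmeas measurable_const)).2 ?_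
    filter_upwards [hcausal] with p hp using le_zero_of_le_zero_of_le_zero htri hp.1 hp.2
  · have hle : (∫⁻ p, absTimeSep ℓ p ^ q ∂γ₀₁) ^ (1 / q) + (∫⁻ p, absTimeSep ℓ p ^ q ∂γ₁₂) ^ (1 / q)
        ≤ (∫⁻ p, absTimeSep ℓ p ^ q ∂θ.map fun p ↦ (p.1, p.2.2)) ^ (1 / q) := by
      rw [← hθ₀₁, ← hθ₁₂, lintegral_map (by fun_prop) hm₀₁, lintegral_map (by fun_prop) hm₀₂,
        lintegral_map (by fun_prop) measurable_snd]
      refine (ENNReal.lintegral_Lp_add_ge_of_le_one (by fun_prop) hq0 hq1).trans ?_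
      gcongr ?_ ^ _
      refine lintegral_mono_ae ?_
      filter_upwards [hcausal] with p hp
      gcongr
      exact absTimeSep_add_le htri hnobot hp.1 hp.2
    exact lqCost_le_add_of_le hle

end Composition

theorem stmt13_general {M : Type*} [MetricSpace M] [TopologicalSpace.SeparableSpace M] [CompleteSpace M]
    [MeasurableSpace M] [BorelSpace M]
    (ℓ : M → M → EReal)
    (htri : ∀ x y z, ℓ x y < ⊤ → ℓ y z < ⊤ → ℓ x z ≤ ℓ x y + ℓ y z)
    (hnobot : ∀ x y, ℓ x y ≠ ⊥)
    (hmeas : Measurable fun p : M × M => ℓ p.1 p.2)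
    (q : ℝ) (hq0 : 0 < q) (hq1 : q ≤ 1)
    (μ0 μ1 μ2 : Measure M)
    [IsProbabilityMeasure μ0] [IsProbabilityMeasure μ1]
    (h01 : lqSep ℓ q μ0 μ1 ≠ ⊤) (h12 : lqSep ℓ q μ1 μ2 ≠ ⊤) :
    lqSep ℓ q μ0 μ2 ≤ lqSep ℓ q μ0 μ1 + lqSep ℓ q μ1 μ2 := by
  refine EReal.le_sInf_add_sInf h01 h12 ?_
  rintro _ ⟨γ₀₁, h₀₁, rfl⟩ _ ⟨γ₁₂, h₁₂, rfl⟩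
  obtain ⟨γ₀₂, h₀₂, hcost⟩ := h₀₁.exists_lqCost_le htri hnobot hmeas hq0 hq1 h₁₂
  exact (lqSep_le_lqCost h₀₂).trans hcost

/-- on a Polish space, ℓ_q satisfies the triangle inequality
whenever both summands on the right are finite. -/
theorem stmt13 {M : Type*} [MetricSpace M] [TopologicalSpace.SeparableSpace M] [CompleteSpace M]
    [MeasurableSpace M] [BorelSpace M]
    (ℓ : M → M → EReal)
    (hrange : ∀ x y, ℓ x y ≤ 0 ∨ ℓ x y = ⊤)
    (hrefl : ∀ x, ℓ x x ≤ 0)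
    (htri : ∀ x y z, ℓ x y < ⊤ → ℓ y z < ⊤ → ℓ x z ≤ ℓ x y + ℓ y z)
    (hnobot : ∀ x y, ℓ x y ≠ ⊥)
    (hmeas : Measurable fun p : M × M => ℓ p.1 p.2)
    (q : ℝ) (hq0 : 0 < q) (hq1 : q ≤ 1)
    (μ0 μ1 μ2 : Measure M)
    [IsProbabilityMeasure μ0] [IsProbabilityMeasure μ1] [IsProbabilityMeasure μ2]
    (h01 : lqSep ℓ q μ0 μ1 ≠ ⊤) (h12 : lqSep ℓ q μ1 μ2 ≠ ⊤) :
    lqSep ℓ q μ0 μ2 ≤ lqSep ℓ q μ0 μ1 + lqSep ℓ q μ1 μ2 :=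
  stmt13_general ℓ htri hnobot hmeas q hq0 hq1 μ0 μ1 μ2 h01 h12
end

section
/- Let (M^n, g) be a smooth Lorentzian manifold with a continuously differentiable symmetric (0,2)-tensor field F satisfying F(p,p) ≥ 0 for all null vectors p (i.e., g(p,p) = 0). Then for each compact subset Z ⊂ M there exists a constant C_Z ∈ ℝ such that F(p,p) ≥ C_Z |g(p,p)| for all p ∈ T_z M with z ∈ Z. -/
/-!
If `η(u) > 0 > η(v)` and `B ≥ 0` on the null cone of `η`, then in the plane of `u` and `v` the
two null lines of `η` lie on either side of `u`, and eliminating the cross term between them gives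
`η(v) B(u) ≤ η(u) B(v)` (the two-vector case of the S-lemma). Hence one timelike `u` and one
spacelike `v` with `η(u) ≥ c`, `η(v) ≤ -c` and `B(u), B(v) ≤ S` force `B ≥ -(S/c) |η|` on the
whole fibre. Constant sections of a local trivialization give such `u`, `v` with uniform `c`, `S`
near every point, and compactness of `Z` makes the constant global. In dimension one there is no
spacelike vector, but then every vector is a multiple of `u`.
-/

open Module Topology Filter Bundle

section

variable {V : Type*} [AddCommGroup V] [Module ℝ V]

/-- What the comparison uses of the signature `(+,-,…,-)`: a timelike vector, and a spacelike one
unless the space is a line. -/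
def IsLorentzLike (η : V →ₗ[ℝ] V →ₗ[ℝ] ℝ) : Prop :=
  ∃ u, 0 < η u u ∧ ((∃ v, η v v < 0) ∨ finrank ℝ V = 1)

theorem IsLorentzLike.compl₁₂ {V' : Type*} [AddCommGroup V'] [Module ℝ V']
    {η : V →ₗ[ℝ] V →ₗ[ℝ] ℝ} (h : IsLorentzLike η) (L : V' ≃ₗ[ℝ] V) :
    IsLorentzLike (η.compl₁₂ (L : V' →ₗ[ℝ] V) L) := by
  obtain ⟨u, hu, ⟨v, hv⟩ | hV⟩ := h
  · exact ⟨L.symm u, by simpa using hu, .inl ⟨L.symm v, by simpa using hv⟩⟩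
  · exact ⟨L.symm u, by simpa using hu, .inr (L.finrank_eq.trans hV)⟩

theorem isLorentzLike_of_basis {n : ℕ} (hn : 1 ≤ n) {η : V →ₗ[ℝ] V →ₗ[ℝ] ℝ}
    (e : Basis (Fin n) ℝ V)
    (he : ∀ i j, η (e i) (e j) = if i = j then (if (i : ℕ) = 0 then 1 else -1) else 0) :
    IsLorentzLike η := by
  refine ⟨e ⟨0, hn⟩, by simp [he], ?_⟩
  rcases hn.eq_or_lt with rfl | h2
  · exact .inr (by simp [finrank_eq_card_basis e])
  · exact .inl ⟨e ⟨1, h2⟩, by simp [he]⟩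

section Pointwise

variable {B η : V →ₗ[ℝ] V →ₗ[ℝ] ℝ}

theorem LinearMap.apply_smul_add_smul_self (B : V →ₗ[ℝ] V →ₗ[ℝ] ℝ) (a b : ℝ) (u v : V) :
    B (a • u + b • v) (a • u + b • v) =
      a ^ 2 * B u u + a * b * (B u v + B v u) + b ^ 2 * B v v := by
  simp only [map_add, map_smul, LinearMap.add_apply, LinearMap.smul_apply, smul_eq_mul]
  ring

theorem mul_apply_self_le_of_nonneg_on_isotropic (hnull : ∀ w, η w w = 0 → 0 ≤ B w w) {u v : V}
    (hu : 0 < η u u) (hv : η v v < 0) : η v v * B u u ≤ η u u * B v v := by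
  set a := η u u
  set c := η v v
  set b := (η u v + η v u) / 2
  obtain ⟨s, hs0, hs⟩ : ∃ s, 0 ≤ s ∧ s ^ 2 = b ^ 2 - a * c :=
    ⟨_, Real.sqrt_nonneg _, Real.sq_sqrt (by nlinarith)⟩
  obtain ⟨hbs, hsb⟩ : -s < b ∧ b < s :=
    abs_lt.mp (abs_lt_of_sq_lt_sq (by nlinarith) hs0)
  -- `(-b ± s) • u + a • v` span the two null lines of `η` in the plane of `u` and `v`
  have hiso : ∀ t, t ^ 2 = s ^ 2 → 0 ≤ B ((-b + t) • u + a • v) ((-b + t) • u + a • v) := by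
    intro t ht
    apply hnull
    rw [η.apply_smul_add_smul_self]
    linear_combination a * (ht + hs)
  have hp := hiso s rfl
  have hm := hiso (-s) (by ring)
  rw [B.apply_smul_add_smul_self] at hp hm
  have key : 0 ≤ (2 * s * a) * (a * B v v - c * B u u) := by
    have h1 := mul_nonneg (by linarith : 0 ≤ b + s) hp
    have h2 := mul_nonneg (by linarith : 0 ≤ s - b) hm
    linear_combination h1 + h2 + 2 * s * B u u * hs
  have := nonneg_of_mul_nonneg_right key (by nlinarith)
  linarith

theorem neg_div_mul_abs_le_of_indefinite (hnull : ∀ w, η w w = 0 → 0 ≤ B w w) {u v : V}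
    {c S : ℝ} (hc : 0 < c) (hS : 0 ≤ S) (hu : c ≤ η u u) (hv : η v v ≤ -c) (hBu : B u u ≤ S)
    (hBv : B v v ≤ S) (w : V) : -(S / c) * |η w w| ≤ B w w := by
  have hSc : S / c * c = S := div_mul_cancel₀ S hc.ne'
  have hSc0 : 0 ≤ S / c := by positivity
  rcases lt_trichotomy (η w w) 0 with hw | hw | hw
  · have h := mul_apply_self_le_of_nonneg_on_isotropic hnull (hc.trans_le hu) hw
    rw [abs_of_neg hw]
    nlinarith [mul_le_mul_of_nonpos_left hBu hw.le, mul_le_mul_of_nonneg_left hu hSc0]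
  · simpa [hw] using hnull w hw
  · have h := mul_apply_self_le_of_nonneg_on_isotropic (v := v) hnull hw (by linarith)
    rw [abs_of_pos hw]
    nlinarith [mul_le_mul_of_nonneg_left hBv hw.le, mul_le_mul_of_nonneg_left hv hSc0]

theorem neg_div_mul_abs_le_of_finrank_eq_one (hV : finrank ℝ V = 1) {u : V} {c S : ℝ}
    (hc : 0 < c) (hS : 0 ≤ S) (hu : c ≤ η u u) (hBu : -S ≤ B u u) (w : V) :
    -(S / c) * |η w w| ≤ B w w := by
  have hu0 : u ≠ 0 := by rintro rfl; simp at hu; linarith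
  obtain ⟨t, rfl⟩ := (finrank_eq_one_iff_of_nonzero' u hu0).mp hV w
  have hSc : S / c * c = S := div_mul_cancel₀ S hc.ne'
  simp only [map_smul, LinearMap.smul_apply, smul_eq_mul]
  rw [← mul_assoc, abs_of_nonneg (mul_nonneg (mul_self_nonneg t) (hc.le.trans hu))]
  nlinarith [mul_le_mul_of_nonneg_left hu (by positivity : 0 ≤ S / c), mul_self_nonneg t]

end Pointwise

section Family

variable {X : Type*} [TopologicalSpace X] {B η : X → V →ₗ[ℝ] V →ₗ[ℝ] ℝ} {x₀ : X}

theorem exists_eventually_mul_abs_le (hB : ∀ w, ContinuousAt (fun x => B x w w) x₀)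
    (hη : ∀ w, ContinuousAt (fun x => η x w w) x₀) (hnull : ∀ x w, η x w w = 0 → 0 ≤ B x w w)
    (hsig : IsLorentzLike (η x₀)) : ∃ C, ∀ᶠ x in 𝓝 x₀, ∀ w, C * |η x w w| ≤ B x w w := by
  obtain ⟨u, hu, ⟨v, hv⟩ | hV⟩ := hsig
  · obtain ⟨c, hc, hcuv⟩ := exists_between (lt_min hu (neg_pos.mpr hv))
    obtain ⟨S, hS⟩ := exists_gt (max (max (B x₀ u u) (B x₀ v v)) 0)
    simp only [lt_min_iff, max_lt_iff] at hcuv hS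
    refine ⟨-(S / c), ?_⟩
    filter_upwards [(hη u).eventually_const_lt hcuv.1,
      (hη v).eventually_lt_const (lt_neg_of_lt_neg hcuv.2), (hB u).eventually_lt_const hS.1.1,
      (hB v).eventually_lt_const hS.1.2] with x hu hv hBu hBv
    exact neg_div_mul_abs_le_of_indefinite (hnull x) hc hS.2.le hu.le (by linarith) hBu.le hBv.le
  · obtain ⟨c, hc, hcu⟩ := exists_between hu
    obtain ⟨S, hS⟩ := exists_gt (max (-B x₀ u u) 0)
    rw [max_lt_iff] at hS
    refine ⟨-(S / c), ?_⟩
    filter_upwards [(hη u).eventually_const_lt hcu, (hB u).eventually_const_lt (neg_lt.mp hS.1)]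
      with x hu hBu
    exact neg_div_mul_abs_le_of_finrank_eq_one hV hc hS.2.le hu.le hBu.le

end Family

end

section Bundle

variable {X F : Type*} {E : X → Type*} [TopologicalSpace X] [NormedAddCommGroup F]
  [NormedSpace ℝ F] [TopologicalSpace (TotalSpace F E)] [∀ x, AddCommGroup (E x)]
  [∀ x, Module ℝ (E x)] [∀ x, TopologicalSpace (E x)] [FiberBundle F E]
  {B η : ∀ x, E x →ₗ[ℝ] E x →ₗ[ℝ] ℝ}

theorem Bundle.Trivialization.continuousAt_apply_symmL (e : Trivialization F (π F E))
    [e.IsLinear ℝ] (hB : Continuous fun v : TotalSpace F E => B v.proj v.2 v.2) {x₀ : X}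
    (hx₀ : x₀ ∈ e.baseSet) (w : F) :
    ContinuousAt (fun x => B x (e.symmL ℝ x w) (e.symmL ℝ x w)) x₀ := by
  refine (hB.continuousAt.comp (e.continuousAt_symm_prodMk_left (v := w) hx₀)).congr ?_
  filter_upwards [e.open_baseSet.mem_nhds hx₀] with x hx
  rw [Function.comp_apply, ← e.mk_symm hx, e.symmL_apply hx]

theorem exists_eventually_mul_abs_le_of_vectorBundle [VectorBundle ℝ F E]
    (hB : Continuous fun v : TotalSpace F E => B v.proj v.2 v.2)
    (hη : Continuous fun v : TotalSpace F E => η v.proj v.2 v.2)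
    (hnull : ∀ x p, η x p p = 0 → 0 ≤ B x p p) (x₀ : X) (hsig : IsLorentzLike (η x₀)) :
    ∃ C, ∀ᶠ x in 𝓝 x₀, ∀ p : E x, C * |η x p p| ≤ B x p p := by
  set e := trivializationAt F E x₀
  have hx₀ : x₀ ∈ e.baseSet := mem_baseSet_trivializationAt F E x₀
  let pullback (β : ∀ x, E x →ₗ[ℝ] E x →ₗ[ℝ] ℝ) (x : X) : F →ₗ[ℝ] F →ₗ[ℝ] ℝ :=
    (β x).compl₁₂ (e.symmL ℝ x : F →ₗ[ℝ] E x) (e.symmL ℝ x : F →ₗ[ℝ] E x)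
  have hsig' : IsLorentzLike (pullback η x₀) := by
    convert hsig.compl₁₂ (e.continuousLinearEquivAt ℝ x₀ hx₀).symm.toLinearEquiv using 2 <;>
      ext w <;> simp [e.symm_continuousLinearEquivAt_eq]
  obtain ⟨C, hC⟩ := exists_eventually_mul_abs_le (B := pullback B)
    (e.continuousAt_apply_symmL hB hx₀) (e.continuousAt_apply_symmL hη hx₀)
    (fun x w => hnull x (e.symmL ℝ x w)) hsig'
  refine ⟨C, ?_⟩
  filter_upwards [hC, e.open_baseSet.mem_nhds hx₀] with x hx hxe p
  simpa only [pullback, LinearMap.compl₁₂_apply, ContinuousLinearMap.coe_coe,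
    e.symmL_continuousLinearMapAt hxe] using hx (e.continuousLinearMapAt ℝ x p)

end Bundle

theorem IsCompact.exists_forall_of_forall_exists_eventually {X α : Type*} [TopologicalSpace X]
    [SemilatticeInf α] [Nonempty α] {Z : Set X} (hZ : IsCompact Z) {P : α → X → Prop}
    (hP : ∀ x, Antitone (P · x)) (h : ∀ x ∈ Z, ∃ C, ∀ᶠ y in 𝓝 x, P C y) :
    ∃ C, ∀ x ∈ Z, P C x := by
  refine hZ.induction_on (p := fun s => ∃ C, ∀ x ∈ s, P C x) ?_ ?_ ?_ ?_
  · exact ⟨Classical.arbitrary α, by simp⟩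
  · exact fun s t hst ⟨C, hC⟩ => ⟨C, fun x hx => hC x (hst hx)⟩
  · rintro s t ⟨C, hC⟩ ⟨C', hC'⟩
    refine ⟨C ⊓ C', fun x hx => hx.elim (fun hx => ?_) (fun hx => ?_)⟩
    · exact hP x inf_le_left (hC x hx)
    · exact hP x inf_le_right (hC' x hx)
  · intro x hx
    obtain ⟨C, hC⟩ := h x hx
    exact ⟨_, mem_nhdsWithin_of_mem_nhds hC, C, fun y hy => hy⟩

open scoped Manifold

theorem stmt17_general {n : ℕ} (hn : 1 ≤ n)
    {M : Type*} [TopologicalSpace M] [ChartedSpace (EuclideanSpace ℝ (Fin n)) M]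
    [IsManifold (𝓡 n) (⊤ : ℕ∞) M]
    (g F : ∀ z : M, TangentSpace (𝓡 n) z →ₗ[ℝ] TangentSpace (𝓡 n) z →ₗ[ℝ] ℝ)
    -- g is smooth, and Lorentzian of signature (+,-,…,-):
    (hgsmooth : ContMDiff ((𝓡 n).tangent) 𝓘(ℝ) (⊤ : ℕ∞)
      (fun v : TangentBundle (𝓡 n) M => g v.proj v.2 v.2))
    (hlorentz : ∀ z : M, ∃ e : Module.Basis (Fin n) ℝ (TangentSpace (𝓡 n) z),
      ∀ i j, g z (e i) (e j) =
        if i = j then (if (i : ℕ) = 0 then 1 else -1) else 0)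
    -- F is continuously differentiable:
    (hFC1 : ContMDiff ((𝓡 n).tangent) 𝓘(ℝ) 1
      (fun v : TangentBundle (𝓡 n) M => F v.proj v.2 v.2))
    -- F is nonnegative on null vectors:
    (hnull : ∀ (z : M) (p : TangentSpace (𝓡 n) z), g z p p = 0 → 0 ≤ F z p p)
    (Z : Set M) (hZ : IsCompact Z) :
    ∃ C : ℝ, ∀ z ∈ Z, ∀ p : TangentSpace (𝓡 n) z, C * |g z p p| ≤ F z p p := by
  refine hZ.exists_forall_of_forall_exists_eventually
    (fun z _ _ hC h p => (mul_le_mul_of_nonneg_right hC (abs_nonneg _)).trans (h p))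
    fun z₀ _ => exists_eventually_mul_abs_le_of_vectorBundle hFC1.continuous
      hgsmooth.continuous hnull z₀ ?_
  obtain ⟨e, he⟩ := hlorentz z₀
  exact isLorentzLike_of_basis hn e he

/-- on a smooth Lorentzian manifold, if a C¹ symmetric (0,2)-tensor
field F is nonnegative on null vectors, then on each compact set Z there is a
constant C_Z with F(p,p) ≥ C_Z |g(p,p)| for all tangent vectors p over Z. -/
theorem stmt17 {n : ℕ} (hn : 1 ≤ n)
    {M : Type*} [TopologicalSpace M] [ChartedSpace (EuclideanSpace ℝ (Fin n)) M]
    [IsManifold (𝓡 n) (⊤ : ℕ∞) M]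
    (g F : ∀ z : M, TangentSpace (𝓡 n) z →ₗ[ℝ] TangentSpace (𝓡 n) z →ₗ[ℝ] ℝ)
    (hgsymm : ∀ z v w, g z v w = g z w v)
    (hFsymm : ∀ z v w, F z v w = F z w v)
    -- g is smooth, and Lorentzian of signature (+,-,…,-):
    (hgsmooth : ContMDiff ((𝓡 n).tangent) 𝓘(ℝ) (⊤ : ℕ∞)
      (fun v : TangentBundle (𝓡 n) M => g v.proj v.2 v.2))
    (hlorentz : ∀ z : M, ∃ e : Module.Basis (Fin n) ℝ (TangentSpace (𝓡 n) z),
      ∀ i j, g z (e i) (e j) =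
        if i = j then (if (i : ℕ) = 0 then 1 else -1) else 0)
    -- F is continuously differentiable:
    (hFC1 : ContMDiff ((𝓡 n).tangent) 𝓘(ℝ) 1
      (fun v : TangentBundle (𝓡 n) M => F v.proj v.2 v.2))
    -- F is nonnegative on null vectors:
    (hnull : ∀ (z : M) (p : TangentSpace (𝓡 n) z), g z p p = 0 → 0 ≤ F z p p)
    (Z : Set M) (hZ : IsCompact Z) :
    ∃ C : ℝ, ∀ z ∈ Z, ∀ p : TangentSpace (𝓡 n) z, C * |g z p p| ≤ F z p p :=
  stmt17_general hn g F hgsmooth hlorentz hFC1 hnull Z hZ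
end
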